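/- arXiv:2502.21305 — 2 statements merged into one kernel-verified Lean document; each statement's English description precedes it below -/
import Mathlib

section
/- For every integer n ≥ 0, in ℤ[x_1,…,x_{n+1}] one has q_n − p_n ≡ Φ_n(x_{n+1}; x_1,…,x_n) (mod 2); in particular q_n − p_n is congruent mod 2 to a homogeneous polynomial of degree 2^n. -/
open MvPolynomial

/-- `Φ n x₀ x = ∏_{I ⊆ {1,…,n}} (x₀ + ∑_{i ∈ I} x i)`. -/
def Phi {R : Type*} [CommRing R] (n : ℕ) (x0 : R) (x : ℕ → R) : R :=
  ∏ I ∈ (Finset.Icc 1 n).powerset, (x0 + ∑ i ∈ I, x i)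

lemma Phi_succ {R : Type*} [CommRing R] (n : ℕ) (x0 : R) (x : ℕ → R) :
    Phi (n + 1) x0 x = Phi n x0 x * Phi n (x0 + x (n + 1)) x := by
  have hIcc : Finset.Icc 1 (n + 1) = insert (n + 1) (Finset.Icc 1 n) := by
    ext i; simp [Finset.mem_Icc]; omega
  have hmem : n + 1 ∉ Finset.Icc 1 n := by simp
  unfold Phi
  rw [hIcc, Finset.powerset_insert, Finset.prod_union, Finset.prod_image]
  · congr 1
    apply Finset.prod_congr rfl
    intro I hI
    have hI' : n + 1 ∉ I := fun h => hmem (Finset.mem_powerset.mp hI h)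
    rw [Finset.sum_insert hI']
    ring
  · intro a ha b hb h
    have ha' : n + 1 ∉ a := fun h => hmem (Finset.mem_powerset.mp ha h)
    have hb' : n + 1 ∉ b := fun h => hmem (Finset.mem_powerset.mp hb h)
    rw [← Finset.erase_insert ha', ← Finset.erase_insert hb', h]
  · rw [Finset.disjoint_left]
    intro I hI hI2
    obtain ⟨J, hJ, rfl⟩ := Finset.mem_image.mp hI2
    exact (fun h => hmem (Finset.mem_powerset.mp hI h)) (Finset.mem_insert_self _ _)

lemma Phi_add {R : Type*} [CommRing R] (h2 : (2 : R) = 0) (x : ℕ → R) :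
    ∀ n (a b : R), Phi n (a + b) x = Phi n a x + Phi n b x := by
  intro n
  induction n with
  | zero => intro a b; simp [Phi]
  | succ n ih =>
    intro a b
    rw [Phi_succ, Phi_succ, Phi_succ]
    set c := x (n + 1)
    have h1 : Phi n (a + b) x = Phi n a x + Phi n b x := ih a b
    have h2' : Phi n (a + b + c) x = Phi n a x + Phi n b x + Phi n c x := by
      rw [ih (a + b) c, ih a b]
    have h3 : Phi n (a + c) x = Phi n a x + Phi n c x := ih a c
    have h4 : Phi n (b + c) x = Phi n b x + Phi n c x := ih b c
    rw [h1, h2', h3, h4]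
    linear_combination (Phi n a x * Phi n b x) * h2

/-- `p_n = Φ_n(1; x₁,…,xₙ) ∈ ℤ[x₁,…,xₙ]`. -/
noncomputable def pPol (n : ℕ) : MvPolynomial ℕ ℤ :=
  Phi n 1 fun i => X i

/-- `q_n = Φ_n(1 + x_{n+1}; x₁,…,xₙ) ∈ ℤ[x₁,…,x_{n+1}]`. -/
noncomputable def qPol (n : ℕ) : MvPolynomial ℕ ℤ :=
  Phi n (1 + X (n + 1)) fun i => X i

/-- Reduction of the integer coefficients mod `2`. Two integral polynomials are
congruent mod `2` iff they have the same image under this map. -/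
noncomputable def toF2 : MvPolynomial ℕ ℤ →+* MvPolynomial ℕ (ZMod 2) :=
  MvPolynomial.map (Int.castRingHom (ZMod 2))

lemma toF2_Phi (n : ℕ) (x0 : MvPolynomial ℕ ℤ) :
    toF2 (Phi n x0 fun i => X i) = Phi n (toF2 x0) fun i => X i := by
  unfold Phi
  rw [map_prod]
  apply Finset.prod_congr rfl
  intro I _
  rw [map_add, map_sum]
  simp [toF2]

/-- For every `n ≥ 0`, `q_n − p_n ≡ Φ_n(x_{n+1}; x₁,…,xₙ) (mod 2)`; in particular
`q_n − p_n` is congruent mod `2` to a homogeneous polynomial of degree `2^n`. -/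
theorem stmt3 (n : ℕ) :
    toF2 (qPol n - pPol n) = toF2 (Phi n (X (n + 1)) fun i => X i) ∧
    (Phi n (X (n + 1) : MvPolynomial ℕ ℤ) fun i => X i).IsHomogeneous (2 ^ n) := by
  constructor
  · have h2 : (2 : MvPolynomial ℕ (ZMod 2)) = 0 := by
      have := CharP.cast_eq_zero (MvPolynomial ℕ (ZMod 2)) 2
      simpa using this
    rw [map_sub]
    unfold qPol pPol
    rw [toF2_Phi, toF2_Phi, toF2_Phi, map_add, map_one]
    rw [Phi_add h2 _ n 1 (toF2 (X (n + 1)))]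
    ring
  · unfold Phi
    have := MvPolynomial.IsHomogeneous.prod (Finset.Icc 1 n).powerset
      (fun I => (X (n + 1) : MvPolynomial ℕ ℤ) + ∑ i ∈ I, X i) (fun _ => 1)
      (fun I _ => (isHomogeneous_X _ _).add
        (MvPolynomial.IsHomogeneous.sum I _ 1 fun i _ => isHomogeneous_X _ _))
    simpa [Finset.card_powerset, Nat.card_Icc] using this
end

section
/- For every integer n ≥ 0, in the ring R_{n+1} one has Φ_n(x_{n+1}; x_1,…,x_n) = (∏_{i=1}^{n} (x_i + ε)^{2^{i−1}}) · x_{n+1}. -/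
open MvPolynomial

/-- The ideal `I_m ⊆ 𝔽₂[x₁,…,x_m,ε]` generated by `x_j² − ε·x_j` for `j = 1,…,m`.
The variables are indexed by `Fin (m+1)`: index `0` is `ε` and index `j ≠ 0` is `x_j`. -/
noncomputable def relIdeal (m : ℕ) : Ideal (MvPolynomial (Fin (m + 1)) (ZMod 2)) :=
  Ideal.span {f : MvPolynomial (Fin (m + 1)) (ZMod 2) |
    ∃ j : Fin (m + 1), j ≠ 0 ∧ f = X j ^ 2 - X 0 * X j}

/-- The ring `R_m = 𝔽₂[x₁,…,x_m,ε]/I_m`. -/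
abbrev Rring (m : ℕ) := MvPolynomial (Fin (m + 1)) (ZMod 2) ⧸ relIdeal m

/-- The image of the variable `x_j` (for `1 ≤ j ≤ m`) in `R_m`. -/
noncomputable def xv (m : ℕ) (j : ℕ) : Rring m :=
  Ideal.Quotient.mk (relIdeal m) (X (Fin.ofNat (m + 1) j))

/-- The image of the variable `ε` in `R_m`. -/
noncomputable def eps (m : ℕ) : Rring m :=
  Ideal.Quotient.mk (relIdeal m) (X 0)

/-!
In characteristic `2` the elements `y` with `y² = ε y` are closed under addition, and every
partial sum `y = x₀ + ∑_{i ∈ I} xᵢ` is such an element. Pairing the factor of `I` with that of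
`I ∪ {n+1}` gives `y (y + x_{n+1}) = (x_{n+1} + ε) y`, so passing from `n` to `n + 1` multiplies
`Φ` by `(x_{n+1} + ε)^{2^n}`; with `Φ₀ = x₀` this is the product formula.
-/

section

variable {R : Type*} [CommRing R]

theorem sq_add_eq_mul_of_two_eq_zero (h2 : (2 : R) = 0) {ε a b : R}
    (ha : a ^ 2 = ε * a) (hb : b ^ 2 = ε * b) : (a + b) ^ 2 = ε * (a + b) := by
  linear_combination ha + hb + a * b * h2

theorem sq_add_sum_eq_mul_of_two_eq_zero (h2 : (2 : R) = 0) {ε x0 : R} {x : ℕ → R}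
    {I : Finset ℕ} (h0 : x0 ^ 2 = ε * x0) (hx : ∀ i ∈ I, x i ^ 2 = ε * x i) :
    (x0 + ∑ i ∈ I, x i) ^ 2 = ε * (x0 + ∑ i ∈ I, x i) := by
  induction I using Finset.induction with
  | empty => simpa using h0
  | insert a s ha ih =>
    rw [Finset.sum_insert ha, add_left_comm]
    exact sq_add_eq_mul_of_two_eq_zero h2 (hx a (s.mem_insert_self a))
      (ih fun i hi => hx i (Finset.mem_insert_of_mem hi))

theorem Phi_zero (x0 : R) (x : ℕ → R) : Phi 0 x0 x = x0 := by
  simp [Phi]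

theorem Phi_succ_s10 (n : ℕ) (x0 : R) (x : ℕ → R) :
    Phi (n + 1) x0 x = ∏ I ∈ (Finset.Icc 1 n).powerset,
      (x0 + ∑ i ∈ I, x i) * (x0 + ∑ i ∈ I, x i + x (n + 1)) := by
  have hn : n + 1 ∉ Finset.Icc 1 n := by simp
  rw [Phi, ← Finset.insert_Icc_right_eq_Icc_add_one (Nat.le_add_left 1 n),
    Finset.prod_powerset_insert hn, ← Finset.prod_mul_distrib]
  refine Finset.prod_congr rfl fun I hI => ?_
  rw [Finset.sum_insert fun h => hn (Finset.mem_powerset.mp hI h), add_comm (x (n + 1)), add_assoc]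

theorem Phi_eq_prod_mul_of_two_eq_zero (h2 : (2 : R) = 0)
    (ε x0 : R) (x : ℕ → R) (n : ℕ) (h0 : x0 ^ 2 = ε * x0)
    (hx : ∀ i ∈ Finset.Icc 1 n, x i ^ 2 = ε * x i) :
    Phi n x0 x = (∏ i ∈ Finset.Icc 1 n, (x i + ε) ^ 2 ^ (i - 1)) * x0 := by
  induction n with
  | zero => simp [Phi_zero]
  | succ n ih =>
    have hsub : Finset.Icc 1 n ⊆ Finset.Icc 1 (n + 1) := Finset.Icc_subset_Icc_right n.le_succ
    have hpair : ∀ I ∈ (Finset.Icc 1 n).powerset,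
        (x0 + ∑ i ∈ I, x i) * (x0 + ∑ i ∈ I, x i + x (n + 1))
          = (x (n + 1) + ε) * (x0 + ∑ i ∈ I, x i) := by
      intro I hI
      have hsq := sq_add_sum_eq_mul_of_two_eq_zero h2 h0
        fun i hi => hx i (hsub (Finset.mem_powerset.mp hI hi))
      linear_combination hsq
    rw [Phi_succ_s10, Finset.prod_congr rfl hpair, Finset.prod_mul_distrib, Finset.prod_const,
      Finset.card_powerset, Nat.card_Icc, ← Phi, ih fun i hi => hx i (hsub hi),
      Finset.prod_Icc_succ_top (Nat.le_add_left 1 n), Nat.add_sub_cancel]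
    ring

end

theorem two_eq_zero_of_zmod_two_algebra {A : Type*} [CommRing A] [Algebra (ZMod 2) A] :
    (2 : A) = 0 :=
  (map_ofNat (algebraMap (ZMod 2) A) 2).symm.trans (map_zero _)

theorem xv_sq {m j : ℕ} (hj : j ∈ Finset.Icc 1 m) : xv m j ^ 2 = eps m * xv m j := by
  rw [Finset.mem_Icc] at hj
  rw [xv, eps, ← map_pow, ← map_mul, Ideal.Quotient.eq]
  refine Ideal.subset_span ⟨Fin.ofNat (m + 1) j, ?_, rfl⟩
  simp only [ne_eq, Fin.ext_iff, Fin.val_ofNat, Fin.val_zero,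
    Nat.mod_eq_of_lt (by omega : j < m + 1)]
  omega

/-- For every `n ≥ 0`, in `R_{n+1}` one has
`Φ_n(x_{n+1}; x₁,…,xₙ) = (∏_{i=1}^{n} (xᵢ + ε)^{2^{i−1}}) · x_{n+1}`. -/
theorem stmt10 (n : ℕ) :
    Phi n (xv (n + 1) (n + 1)) (xv (n + 1))
      = (∏ i ∈ Finset.Icc 1 n, (xv (n + 1) i + eps (n + 1)) ^ (2 ^ (i - 1)))
          * xv (n + 1) (n + 1) :=
  Phi_eq_prod_mul_of_two_eq_zero two_eq_zero_of_zmod_two_algebra _ _ _ n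
    (xv_sq (Finset.right_mem_Icc.mpr (Nat.le_add_left 1 n)))
    fun _ hi => xv_sq (Finset.Icc_subset_Icc_right n.le_succ hi)
end
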